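/- arXiv:2506.02193 — 5 statements merged into one kernel-verified Lean document; each statement's English description precedes it below -/
import Mathlib

section
/- Let n ≥ 1 and let d : Fin n → ℝ be positive demands with total demand D = ∑ i, d i, and set the supply S = D/2. Then the following are equivalent: (1) there exists a subset C ⊆ Fin n (a Finset) with ∑_{i ∈ C} d i = S; (2) there exists a nonnegative function t : Finset (Fin n) → ℝ such that ∑_{C} t C = 1, t C = 0 for every C with ∑_{i ∈ C} d i > S, and for every agent i, ∑_{C : i ∈ C} t C ≥ 1/2. -/
/-- Equivalence between the existence of an equal-sum partition
(a subset of the agents whose total demand equals half the total demand) and the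
existence of a fractional schedule over configurations giving every agent at
least half of the time. -/
theorem maxEED_partition_iff_schedule
    (n : ℕ) (hn : 1 ≤ n) (d : Fin n → ℝ) (hd : ∀ i, 0 < d i)
    (D S : ℝ) (hD : D = ∑ i, d i) (hS : S = D / 2) :
    (∃ C : Finset (Fin n), ∑ i ∈ C, d i = S) ↔
      (∃ t : Finset (Fin n) → ℝ,
        (∀ C, 0 ≤ t C) ∧
        (∑ C : Finset (Fin n), t C) = 1 ∧
        (∀ C : Finset (Fin n), (∑ i ∈ C, d i) > S → t C = 0) ∧
        (∀ i : Fin n,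
          (∑ C ∈ Finset.univ.filter (fun C : Finset (Fin n) => i ∈ C), t C) ≥ 1 / 2)) := by
  constructor
  · rintro ⟨C, hC⟩
    refine ⟨fun X => (if X = C then (1:ℝ)/2 else 0) + (if X = Cᶜ then (1:ℝ)/2 else 0),
      fun X => by positivity, ?_, ?_, ?_⟩
    · rw [Finset.sum_add_distrib, Finset.sum_ite_eq' Finset.univ C,
        Finset.sum_ite_eq' Finset.univ Cᶜ]
      simp; norm_num
    · intro X hX
      have hCc : ∑ i ∈ Cᶜ, d i = S := by
        have := Finset.sum_add_sum_compl C d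
        rw [hC] at this
        have : S + ∑ i ∈ Cᶜ, d i = D := by rw [this, hD]
        linarith [this, hS]
      have h1 : X ≠ C := by rintro rfl; linarith
      have h2 : X ≠ Cᶜ := by rintro rfl; linarith
      simp [h1, h2]
    · intro i
      by_cases hi : i ∈ C
      · have hmem : C ∈ Finset.univ.filter (fun X : Finset (Fin n) => i ∈ X) := by
          simp [hi]
        refine le_trans ?_ (Finset.single_le_sum
          (f := fun X : Finset (Fin n) => (if X = C then (1:ℝ)/2 else 0) + (if X = Cᶜ then (1:ℝ)/2 else 0))
          (fun X _ => by positivity) hmem)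
        simp
        positivity
      · have hi' : i ∈ Cᶜ := Finset.mem_compl.mpr hi
        have hmem : Cᶜ ∈ Finset.univ.filter (fun X : Finset (Fin n) => i ∈ X) := by
          simp [hi']
        have hne : Cᶜ ≠ C := by
          intro h; rw [← h] at hi; exact hi hi'
        refine le_trans ?_ (Finset.single_le_sum
          (f := fun X : Finset (Fin n) => (if X = C then (1:ℝ)/2 else 0) + (if X = Cᶜ then (1:ℝ)/2 else 0))
          (fun X _ => by positivity) hmem)
        simp [hne]
  · rintro ⟨t, ht0, hsum, hcap, hutil⟩
    -- key swap
    have hswap : ∑ C : Finset (Fin n), t C * (∑ i ∈ C, d i)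
        = ∑ i : Fin n, d i * (∑ C ∈ Finset.univ.filter (fun X : Finset (Fin n) => i ∈ X), t C) := by
      have : ∀ C : Finset (Fin n), t C * (∑ i ∈ C, d i)
          = ∑ i : Fin n, (if i ∈ C then t C * d i else 0) := by
        intro C
        rw [Finset.mul_sum, ← Finset.sum_filter]
        congr 1
        ext i; simp
      simp_rw [this]
      rw [Finset.sum_comm]
      congr 1; ext i
      rw [Finset.sum_filter, Finset.mul_sum]
      congr 1; ext C
      split <;> ring_nf
    have hge : ∑ C : Finset (Fin n), t C * (∑ i ∈ C, d i) ≥ S := by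
      rw [hswap]
      have : ∀ i : Fin n, d i * (1/2 : ℝ) ≤ d i * (∑ C ∈ Finset.univ.filter (fun X : Finset (Fin n) => i ∈ X), t C) := by
        intro i
        exact mul_le_mul_of_nonneg_left (hutil i) (hd i).le
      calc S = ∑ i : Fin n, d i * (1/2) := by
              rw [hS, hD, Finset.sum_div]
              exact Finset.sum_congr rfl (fun i _ => by ring)
        _ ≤ _ := Finset.sum_le_sum (fun i _ => this i)
    have hterm : ∀ C : Finset (Fin n), t C * (∑ i ∈ C, d i) ≤ t C * S := by
      intro C
      by_cases h : (∑ i ∈ C, d i) > S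
      · rw [hcap C h]; simp
      · exact mul_le_mul_of_nonneg_left (not_lt.mp h) (ht0 C)
    have hle : ∑ C : Finset (Fin n), t C * (∑ i ∈ C, d i) ≤ S := by
      calc _ ≤ ∑ C : Finset (Fin n), t C * S := Finset.sum_le_sum (fun C _ => hterm C)
        _ = S := by rw [← Finset.sum_mul, hsum, one_mul]
    have heq : ∑ C : Finset (Fin n), (t C * S - t C * (∑ i ∈ C, d i)) = 0 := by
      rw [Finset.sum_sub_distrib, ← Finset.sum_mul, hsum, one_mul]
      linarith
    -- exists C with t C > 0
    have hex : ∃ C : Finset (Fin n), 0 < t C := by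
      by_contra h
      push_neg at h
      have : ∑ C : Finset (Fin n), t C = 0 :=
        Finset.sum_eq_zero (fun C _ => le_antisymm (h C) (ht0 C))
      rw [hsum] at this; norm_num at this
    obtain ⟨C, hC⟩ := hex
    refine ⟨C, ?_⟩
    have hzero : ∀ X ∈ (Finset.univ : Finset (Finset (Fin n))),
        t X * S - t X * (∑ i ∈ X, d i) = 0 := by
      intro X _
      have := Finset.sum_eq_zero_iff_of_nonneg (fun X _ => sub_nonneg.mpr (hterm X)) |>.mp heq
      exact this X (Finset.mem_univ X)
    have := hzero C (Finset.mem_univ C)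
    have hCS : t C * S = t C * (∑ i ∈ C, d i) := by linarith
    have := mul_left_cancel₀ (ne_of_gt hC) hCS
    linarith
end

section
/- Let n ≥ 1 and let d : Fin n → ℝ be positive demands with total demand D = ∑ i, d i and supply S = D/2. Suppose t : Finset (Fin n) → ℝ is a nonnegative function with ∑_{C} t C = 1, t C = 0 whenever ∑_{i ∈ C} d i > S, and ∑_{C : i ∈ C} t C ≥ 1/2 for every agent i. Then every configuration C with t C > 0 satisfies ∑_{i ∈ C} d i = S and ∑_{i ∉ C} d i = S (so each used configuration together with its complement forms an equal-sum partition of the demands), and moreover every agent i satisfies ∑_{C : i ∈ C} t C = 1/2 exactly. -/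
/-- Structural claim in the hard direction of the NP-hardness proof
of MaxEED: if a fractional schedule connects every agent at least half the time and
the supply equals half the total demand, then every configuration used with positive
time has total demand exactly `S` (and its complement too), and every agent is
connected exactly half the time. -/
theorem maxEED_schedule_structure
    (n : ℕ) (hn : 1 ≤ n) (d : Fin n → ℝ) (hd : ∀ i, 0 < d i)
    (D S : ℝ) (hD : D = ∑ i, d i) (hS : S = D / 2)
    (t : Finset (Fin n) → ℝ)
    (ht0 : ∀ C, 0 ≤ t C)
    (ht1 : (∑ C : Finset (Fin n), t C) = 1)
    (htS : ∀ C : Finset (Fin n), (∑ i ∈ C, d i) > S → t C = 0)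
    (hhalf : ∀ i : Fin n,
      (∑ C ∈ Finset.univ.filter (fun C : Finset (Fin n) => i ∈ C), t C) ≥ 1 / 2) :
    (∀ C : Finset (Fin n), 0 < t C →
      (∑ i ∈ C, d i) = S ∧ (∑ i ∈ Cᶜ, d i) = S) ∧
    (∀ i : Fin n,
      (∑ C ∈ Finset.univ.filter (fun C : Finset (Fin n) => i ∈ C), t C) = 1 / 2) := by
  -- utilities
  set u : Fin n → ℝ := fun i => ∑ C ∈ Finset.univ.filter (fun C : Finset (Fin n) => i ∈ C), t C
    with hu
  -- key double sum
  have hswap : (∑ C : Finset (Fin n), t C * ∑ i ∈ C, d i) = ∑ i, d i * u i := by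
    have : (∑ C : Finset (Fin n), t C * ∑ i ∈ C, d i)
        = ∑ C : Finset (Fin n), ∑ i : Fin n, (if i ∈ C then t C * d i else 0) := by
      refine Finset.sum_congr rfl fun C _ => ?_
      rw [Finset.mul_sum]
      rw [← Finset.sum_filter]
      congr 1
      ext i
      simp
    rw [this, Finset.sum_comm]
    refine Finset.sum_congr rfl fun i _ => ?_
    show _ = d i * ∑ C ∈ Finset.univ.filter (fun C : Finset (Fin n) => i ∈ C), t C
    rw [Finset.sum_filter, Finset.mul_sum]
    exact Finset.sum_congr rfl fun C _ => by by_cases h : i ∈ C <;> simp [h, mul_comm]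
  -- upper bound: A ≤ S
  have hub : (∑ C : Finset (Fin n), t C * ∑ i ∈ C, d i) ≤ S := by
    calc (∑ C : Finset (Fin n), t C * ∑ i ∈ C, d i)
        ≤ ∑ C : Finset (Fin n), t C * S := by
          refine Finset.sum_le_sum fun C _ => ?_
          by_cases h : (∑ i ∈ C, d i) > S
          · simp [htS C h]
          · exact mul_le_mul_of_nonneg_left (not_lt.mp h) (ht0 C)
      _ = S := by rw [← Finset.sum_mul, ht1, one_mul]
  -- lower bound via utilities
  have hlb : S ≤ ∑ i, d i * u i := by
    have : (∑ i, d i * (1/2 : ℝ)) ≤ ∑ i, d i * u i :=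
      Finset.sum_le_sum fun i _ => mul_le_mul_of_nonneg_left (hhalf i) (hd i).le
    calc S = (∑ i, d i) * (1/2) := by rw [hS, hD]; ring
      _ = ∑ i, d i * (1/2) := by rw [Finset.sum_mul]
      _ ≤ _ := this
  have hA : (∑ C : Finset (Fin n), t C * ∑ i ∈ C, d i) = S :=
    le_antisymm hub (hswap ▸ hlb)
  -- each agent exactly 1/2
  have hagents : ∀ i, u i = 1/2 := by
    have hsum0 : (∑ i, d i * (u i - 1/2)) = 0 := by
      have : (∑ i, d i * u i) = S := by rw [← hswap, hA]
      have h2 : (∑ i, d i * (1/2 : ℝ)) = S := by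
        rw [← Finset.sum_mul, ← hD, hS]; ring
      calc (∑ i, d i * (u i - 1/2)) = (∑ i, d i * u i) - ∑ i, d i * (1/2 : ℝ) := by
            rw [← Finset.sum_sub_distrib]; exact Finset.sum_congr rfl fun i _ => by ring
        _ = 0 := by rw [this, h2, sub_self]
    intro i
    have hnn : ∀ j ∈ Finset.univ, 0 ≤ d j * (u j - 1/2) := fun j _ =>
      mul_nonneg (hd j).le (sub_nonneg.mpr (hhalf j))
    have := (Finset.sum_eq_zero_iff_of_nonneg hnn).mp hsum0 i (Finset.mem_univ i)
    have hne : d i ≠ 0 := (hd i).ne'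
    have : u i - 1/2 = 0 := by
      rcases mul_eq_zero.mp this with h | h
      · exact absurd h hne
      · exact h
    linarith
  refine ⟨fun C hC => ?_, hagents⟩
  -- each used config has demand exactly S
  have hsum0 : (∑ C : Finset (Fin n), t C * (S - ∑ i ∈ C, d i)) = 0 := by
    have : (∑ C : Finset (Fin n), t C * S) = S := by rw [← Finset.sum_mul, ht1, one_mul]
    calc (∑ C : Finset (Fin n), t C * (S - ∑ i ∈ C, d i))
        = (∑ C : Finset (Fin n), t C * S) - ∑ C : Finset (Fin n), t C * ∑ i ∈ C, d i := by
          rw [← Finset.sum_sub_distrib]; exact Finset.sum_congr rfl fun C _ => by ring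
      _ = 0 := by rw [this, hA, sub_self]
  have hnn : ∀ C ∈ (Finset.univ : Finset (Finset (Fin n))), 0 ≤ t C * (S - ∑ i ∈ C, d i) := by
    intro C _
    by_cases h : (∑ i ∈ C, d i) > S
    · simp [htS C h]
    · exact mul_nonneg (ht0 C) (sub_nonneg.mpr (not_lt.mp h))
  have hzero := (Finset.sum_eq_zero_iff_of_nonneg hnn).mp hsum0 C (Finset.mem_univ C)
  have hCS : (∑ i ∈ C, d i) = S := by
    rcases mul_eq_zero.mp hzero with h | h
    · exact absurd h hC.ne'
    · linarith [sub_eq_zero.mp h]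
  refine ⟨hCS, ?_⟩
  have htotal : (∑ i ∈ C, d i) + (∑ i ∈ Cᶜ, d i) = D := by
    rw [hD, ← Finset.sum_add_sum_compl C d]
  have : D = 2 * S := by rw [hS]; ring
  linarith
end

section
/- Let n ≥ 1, let v : Fin n → ℝ be nonnegative values with v_max := max_i v i > 0, let ε ∈ (0,1), set θ := ε · v_max / n, and define rounded values r i := ⌊v i / θ⌋. Let 𝓕 be any nonempty family of finite subsets of Fin n (the legal packings). Suppose C^r ∈ 𝓕 maximizes ∑_{i ∈ C} r i over 𝓕, C* ∈ 𝓕 maximizes ∑_{i ∈ C} v i over 𝓕, and v_max ≤ ∑_{i ∈ C*} v i. Then ∑_{i ∈ C^r} v i ≥ (1 − ε) · ∑_{i ∈ C*} v i. -/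
/-- The value-rounding lemma for the FPTAS for Geographic Knapsack:
an optimal packing with respect to the rounded values `r i = ⌊v i / θ⌋`, where
`θ = ε · v_max / n`, is a `(1 - ε)`-approximation with respect to the original values,
provided `v_max` does not exceed the optimal total value. -/
theorem rounding_lemma
    (n : ℕ) (hn : 1 ≤ n) (v : Fin n → ℝ) (hv : ∀ i, 0 ≤ v i)
    (vmax : ℝ) (hvmax_le : ∀ i, v i ≤ vmax) (hvmax_mem : ∃ i, v i = vmax)
    (hvmax_pos : 0 < vmax)
    (ε : ℝ) (hε : ε ∈ Set.Ioo (0 : ℝ) 1)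
    (θ : ℝ) (hθ : θ = ε * vmax / n)
    (r : Fin n → ℤ) (hr : ∀ i, r i = ⌊v i / θ⌋)
    (F : Set (Finset (Fin n))) (hF : F.Nonempty)
    (Cr : Finset (Fin n)) (hCr : Cr ∈ F)
    (hCr_opt : ∀ C ∈ F, (∑ i ∈ C, r i) ≤ ∑ i ∈ Cr, r i)
    (Cstar : Finset (Fin n)) (hCstar : Cstar ∈ F)
    (hCstar_opt : ∀ C ∈ F, (∑ i ∈ C, v i) ≤ ∑ i ∈ Cstar, v i)
    (hvmax_le_opt : vmax ≤ ∑ i ∈ Cstar, v i) :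
    (∑ i ∈ Cr, v i) ≥ (1 - ε) * ∑ i ∈ Cstar, v i := by
  obtain ⟨hε0, hε1⟩ := hε
  have hnR : (0:ℝ) < n := by exact_mod_cast Nat.lt_of_lt_of_le Nat.zero_lt_one hn
  have hθpos : 0 < θ := by
    rw [hθ]; positivity
  have h1 : ∀ i, θ * (r i : ℝ) ≤ v i := by
    intro i
    have := Int.floor_le (v i / θ)
    rw [hr i]
    calc θ * (⌊v i / θ⌋ : ℝ) ≤ θ * (v i / θ) := by
          exact mul_le_mul_of_nonneg_left this hθpos.le
      _ = v i := by field_simp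
  have h2 : ∀ i, v i - θ ≤ θ * (r i : ℝ) := by
    intro i
    have h := Int.sub_one_lt_floor (v i / θ)
    rw [hr i]
    have he : θ * (v i / θ - 1) = v i - θ := by field_simp
    have := mul_lt_mul_of_pos_left h hθpos
    rw [he] at this
    exact this.le
  have hA : (∑ i ∈ Cr, v i) ≥ θ * ∑ i ∈ Cr, (r i : ℝ) := by
    rw [Finset.mul_sum]
    exact Finset.sum_le_sum fun i _ => h1 i
  have hB : θ * (∑ i ∈ Cstar, (r i : ℝ)) ≤ θ * ∑ i ∈ Cr, (r i : ℝ) := by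
    apply mul_le_mul_of_nonneg_left _ hθpos.le
    exact_mod_cast hCr_opt Cstar hCstar
  have hC : (∑ i ∈ Cstar, v i) - θ * n ≤ θ * ∑ i ∈ Cstar, (r i : ℝ) := by
    have hcard : (Cstar.card : ℝ) ≤ n := by
      exact_mod_cast (Cstar.card_le_card (Finset.subset_univ _)).trans_eq (by simp)
    have : (∑ i ∈ Cstar, (v i - θ)) ≤ θ * ∑ i ∈ Cstar, (r i : ℝ) := by
      rw [Finset.mul_sum]
      exact Finset.sum_le_sum fun i _ => h2 i
    rw [Finset.sum_sub_distrib, Finset.sum_const, nsmul_eq_mul] at this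
    nlinarith [this, hθpos]
  have hθn : θ * n = ε * vmax := by
    rw [hθ]; field_simp
  nlinarith [hA, hB, hC, hvmax_le_opt, hε0]
end

section
/- Let G be a finite tree rooted at s with non-root vertex set N, |N| = n, and let f : N → Fin n be a numbering such that dist(s, u) > dist(s, u') implies f u < f u', and the children of each vertex receive consecutive numbers. Let i ∈ N with parent p (the neighbor of i with dist(s, p) = dist(s, i) − 1), and suppose f i is minimal among {f c : c is a child of p} (i is a 'first child'). Then for every nonempty set C ⊆ {u ∈ N : f u ≤ f i} such that the subgraph of G induced on C ∪ {p} is connected, we have i ∈ C. -/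
/-- 'First child' case of the dynamic program for Geographic
Knapsack on trees: if `i` is the lowest-numbered child of its parent `p`, then any
nonempty set `C` of vertices numbered at most `f i` whose union with `{p}` induces a
connected subgraph must contain `i`. -/
theorem first_child_mem_of_connected
    {V : Type*} [Fintype V] [DecidableEq V] (G : SimpleGraph V) (hG : G.IsTree)
    (s : V) (n : ℕ)
    (f : {u : V // u ≠ s} → Fin n) (hbij : Function.Bijective f)
    (hmono : ∀ u u' : {u : V // u ≠ s}, G.dist s ↑u > G.dist s ↑u' → f u < f u')
    (hconsec : ∀ v : V, ∀ u u' : {u : V // u ≠ s},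
      (G.Adj v ↑u ∧ G.dist s ↑u = G.dist s v + 1) →
      (G.Adj v ↑u' ∧ G.dist s ↑u' = G.dist s v + 1) →
      ∀ m : Fin n, f u ≤ m → m ≤ f u' →
        ∃ c : {u : V // u ≠ s},
          (G.Adj v ↑c ∧ G.dist s ↑c = G.dist s v + 1) ∧ f c = m)
    (i : V) (hi : i ≠ s) (p : V)
    (hadj : G.Adj p i) (hpar : G.dist s i = G.dist s p + 1)
    (hfirst : ∀ c : {u : V // u ≠ s},
      G.Adj p ↑c → G.dist s ↑c = G.dist s p + 1 → f ⟨i, hi⟩ ≤ f c)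
    (C : Set V) (hCne : C.Nonempty)
    (hCsub : ∀ u ∈ C, ∃ hu : u ≠ s, f ⟨u, hu⟩ ≤ f ⟨i, hi⟩)
    (hconn : (G.induce (C ∪ {p})).Connected) :
    i ∈ C := by
  have hdeep : ∀ u ∈ C, G.dist s p + 1 ≤ G.dist s u := by
    intro u hu
    obtain ⟨hus, hfu⟩ := hCsub u hu
    by_contra h
    push_neg at h
    have : G.dist s i > G.dist s u := by omega
    exact absurd (hmono ⟨i, hi⟩ ⟨u, hus⟩ this) (not_lt.mpr hfu)
  have hpC : p ∉ C := fun hp => by have := hdeep p hp; omega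
  obtain ⟨x, hx⟩ := hCne
  have hxP : x ∈ C ∪ {p} := Or.inl hx
  have hpP : p ∈ C ∪ {p} := Or.inr rfl
  obtain ⟨w⟩ := hconn ⟨p, hpP⟩ ⟨x, hxP⟩
  have hne : (⟨p, hpP⟩ : ↥(C ∪ {p})) ≠ ⟨x, hxP⟩ := by
    intro h
    apply hpC
    have : p = x := congrArg Subtype.val h
    rw [this]; exact hx
  have hnil := SimpleGraph.Walk.not_nil_of_ne hne (p := w)
  set b : ↥(C ∪ {p}) := w.getVert 1 with hb
  have hGb : G.Adj p ↑b := (w.firstDart hnil).adj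
  have hbC : (b : V) ∈ C := by
    cases b.2 with
    | inl hc => exact hc
    | inr hc => exact absurd hc.symm hGb.ne
  obtain ⟨hbs, hfb⟩ := hCsub b hbC
  have hle : G.dist s ↑b ≤ G.dist s p + 1 := by
    have htri := hG.isConnected.dist_triangle (u := s) (v := p) (w := (b : V))
    rwa [(SimpleGraph.dist_eq_one_iff_adj).mpr hGb] at htri
  have hdb : G.dist s ↑b = G.dist s p + 1 := le_antisymm hle (hdeep b hbC)
  have hge := hfirst ⟨b, hbs⟩ hGb hdb
  have hfe : f ⟨(b : V), hbs⟩ = f ⟨i, hi⟩ := le_antisymm hfb hge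
  have heq : (⟨(b : V), hbs⟩ : {u : V // u ≠ s}) = ⟨i, hi⟩ := hbij.1 hfe
  have : (b : V) = i := congrArg Subtype.val heq
  exact this ▸ hbC
end

section
/- Let G be a finite tree rooted at s, let i be a non-root vertex with parent p (the neighbor of i with dist(s, p) = dist(s, i) − 1), and let D denote the set of proper descendants of i (vertices u ≠ i whose unique path to s passes through i). Let C be a set of vertices with i ∈ C, p ∉ C, s ∉ C. Write B := C ∩ D and A := C \ (D ∪ {i}). Then the subgraph of G induced on C ∪ {p} is connected if and only if both the subgraph induced on B ∪ {i} is connected and the subgraph induced on A ∪ {p} is connected. -/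
/-!
In a tree rooted at `s`, the only edge between the subtree `K` of `i` and its complement is
the edge `ip`. Collapsing the complement of `K` onto `i` (resp. `K` onto `p`) therefore turns
walks in the graph induced on `C ∪ {p}` into walks inside either side, and conversely the two
sides glue along the edge `ip`.
-/

namespace SimpleGraph

variable {V : Type*} {G : SimpleGraph V}

/-- The retraction of `S` onto `S ∩ L` collapsing `S \ L` to `x` sends every edge to an edge
or a loop. -/
theorem Connected.induce_inter_of_cutVertex {S L : Set V} {x : V}
    (hS : (G.induce S).Connected) (hxS : x ∈ S) (hxL : x ∈ L)
    (hexit : ∀ u v, u ∈ L → v ∉ L → G.Adj u v → u = x) :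
    (G.induce (S ∩ L)).Connected := by
  classical
  let f : S → ↥(S ∩ L) := fun u => if h : (u : V) ∈ L then ⟨u, u.2, h⟩ else ⟨x, hxS, hxL⟩
  have hf_mem : ∀ u : S, (hu : (u : V) ∈ L) → f u = ⟨u, u.2, hu⟩ := fun _ hu => dif_pos hu
  have hf_notMem : ∀ u : S, (u : V) ∉ L → f u = ⟨x, hxS, hxL⟩ := fun _ hu => dif_neg hu
  have hf_adj : ∀ a b : S, (G.induce S).Adj a b → (G.induce (S ∩ L)).Reachable (f a) (f b) := by
    intro a b hab
    by_cases ha : (a : V) ∈ L <;> by_cases hb : (b : V) ∈ L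
    · rw [hf_mem a ha, hf_mem b hb]; exact Adj.reachable hab
    · rw [hf_mem a ha, hf_notMem b hb]; simp only [hexit a b ha hb hab]; rfl
    · rw [hf_notMem a ha, hf_mem b hb]; simp only [hexit b a hb ha hab.symm]; rfl
    · rw [hf_notMem a ha, hf_notMem b hb]
  refine (connected_iff _).2 ⟨fun u v => ?_, ⟨⟨x, hxS, hxL⟩⟩⟩
  have h := (reachable_iff_reflTransGen _ _).1 (hS ⟨u, u.2.1⟩ ⟨v, v.2.1⟩)
  have h' : (G.induce (S ∩ L)).Reachable (f ⟨u, u.2.1⟩) (f ⟨v, v.2.1⟩) :=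
    (reachable_iff_reflTransGen _ _).2 <| Relation.ReflTransGen.lift' f
      (fun a b hab => (reachable_iff_reflTransGen _ _).1 (hf_adj a b hab)) _ _ h
  rwa [hf_mem _ u.2.2, hf_mem _ v.2.2] at h'

def subtree (G : SimpleGraph V) (s i : V) : Set V :=
  {u | ∀ w : G.Walk u s, w.IsPath → i ∈ w.support}

theorem mem_subtree_self (s i : V) : i ∈ G.subtree s i :=
  fun w _ => w.start_mem_support

theorem notMem_subtree_iff {s i u : V} :
    u ∉ G.subtree s i ↔ ∃ w : G.Walk u s, w.IsPath ∧ i ∉ w.support := by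
  simp [subtree]

theorem Connected.notMem_subtree_of_dist_lt (hG : G.Connected) {s i p : V}
    (hdist : G.dist s p < G.dist s i) : p ∉ G.subtree s i := by
  classical
  obtain ⟨w, hw, hlen⟩ := hG.exists_path_of_dist p s
  refine notMem_subtree_iff.2 ⟨w, hw, fun hi => ?_⟩
  have : G.dist i s ≤ G.dist p s := calc
    G.dist i s ≤ (w.dropUntil i hi).length := dist_le _
    _ ≤ w.length := w.length_dropUntil_le_length hi
    _ = G.dist p s := hlen
  rw [dist_comm, dist_comm (u := p)] at this
  omega

/-- Otherwise `i` would have two distinct paths to `s`, through `v` and through `v'`. -/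
theorem IsAcyclic.eq_of_adj_of_isPath_notMem (hG : G.IsAcyclic) {s i v v' : V}
    (hv : G.Adj i v) (hv' : G.Adj i v') (w : G.Walk v s) (w' : G.Walk v' s)
    (hw : w.IsPath) (hw' : w'.IsPath) (hi : i ∉ w.support) (hi' : i ∉ w'.support) :
    v = v' := by
  have h := (hG.subsingleton_path i s).elim ⟨_, hw.cons hi (h := hv)⟩ ⟨_, hw'.cons hi' (h := hv')⟩
  simpa using congrArg (fun q : G.Path i s => q.1.getVert 1) h

theorem IsAcyclic.eq_of_adj_of_mem_subtree (hG : G.IsAcyclic) {s i p u v : V}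
    (hip : G.Adj i p) (hp : p ∉ G.subtree s i) (hu : u ∈ G.subtree s i)
    (hv : v ∉ G.subtree s i) (huv : G.Adj u v) : u = i ∧ v = p := by
  classical
  obtain ⟨w, hw, hiw⟩ := notMem_subtree_iff.1 hv
  obtain ⟨wp, hwp, hiwp⟩ := notMem_subtree_iff.1 hp
  have hui : u = i := by
    by_cases huw : u ∈ w.support
    · exact absurd (w.support_dropUntil_subset_support huw (hu _ (hw.dropUntil huw))) hiw
    · simpa [hiw, eq_comm] using hu _ (hw.cons huw (h := huv))
  subst hui
  exact ⟨rfl, hG.eq_of_adj_of_isPath_notMem huv hip w wp hw hwp hiw hiwp⟩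

end SimpleGraph

open SimpleGraph

theorem tree_packing_decomposition_general
    {V : Type*} (G : SimpleGraph V) (hG : G.IsTree)
    (s i p : V)
    (hadj : G.Adj p i) (hpar : G.dist s i = G.dist s p + 1)
    (D : Set V)
    (hD : D = {u : V | u ≠ i ∧ ∀ w : G.Walk u s, w.IsPath → i ∈ w.support})
    (C : Set V) (hiC : i ∈ C)
    (B A : Set V) (hB : B = C ∩ D) (hA : A = C \ (D ∪ {i})) :
    (G.induce (C ∪ {p})).Connected ↔
      (G.induce (B ∪ {i})).Connected ∧ (G.induce (A ∪ {p})).Connected := by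
  set K := G.subtree s i
  have hiK : i ∈ K := mem_subtree_self s i
  have hpK : p ∉ K := hG.connected.notMem_subtree_of_dist_lt (by omega)
  have hDK : D ∪ {i} = K := by
    rw [hD]; ext u; by_cases hu : u = i <;> simp [hu, K, subtree]
  have hpDi : p ∉ D ∪ {i} := hDK ▸ hpK
  have hBK : B ∪ {i} = (C ∪ {p}) ∩ K := by
    rw [hB, ← hDK]; ext u; grind
  have hAK : A ∪ {p} = (C ∪ {p}) ∩ Kᶜ := by
    rw [hA, ← hDK]; ext u; grind
  have hexit {u v : V} : u ∈ K → v ∉ K → G.Adj u v → u = i ∧ v = p :=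
    hG.isAcyclic.eq_of_adj_of_mem_subtree hadj.symm hpK
  rw [hBK, hAK]
  refine ⟨fun h => ⟨?_, ?_⟩, fun ⟨hK, hKc⟩ => ?_⟩
  · exact h.induce_inter_of_cutVertex (Or.inl hiC) hiK fun u v hu hv huv => (hexit hu hv huv).1
  · refine h.induce_inter_of_cutVertex (Or.inr rfl) hpK fun u v hu hv huv => ?_
    exact (hexit (not_not.1 hv) hu huv.symm).2
  · rw [← Set.inter_union_compl (C ∪ {p}) K]
    exact connected_induce_union hK.preconnected hKc.preconnected
      ⟨Or.inl hiC, hiK⟩ ⟨Or.inr rfl, hpK⟩ hadj.symm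

/-- Decomposition step of the correctness proof for the dynamic
program for Geographic Knapsack on trees: for a vertex `i` with parent `p`, and a
set `C` containing `i` but neither `p` nor the root `s`, the subgraph induced on
`C ∪ {p}` is connected iff the part of `C` inside `i`'s subtree is connected through
`i` and the rest of `C` is connected through `p`. Here `D` is the set of proper
descendants of `i`: vertices `u ≠ i` whose (unique) path to `s` passes through `i`. -/
theorem tree_packing_decomposition
    {V : Type*} [Fintype V] (G : SimpleGraph V) (hG : G.IsTree)
    (s i p : V) (hi : i ≠ s)
    (hadj : G.Adj p i) (hpar : G.dist s i = G.dist s p + 1)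
    (D : Set V)
    (hD : D = {u : V | u ≠ i ∧ ∀ w : G.Walk u s, w.IsPath → i ∈ w.support})
    (C : Set V) (hiC : i ∈ C) (hpC : p ∉ C) (hsC : s ∉ C)
    (B A : Set V) (hB : B = C ∩ D) (hA : A = C \ (D ∪ {i})) :
    (G.induce (C ∪ {p})).Connected ↔
      (G.induce (B ∪ {i})).Connected ∧ (G.induce (A ∪ {p})).Connected :=
  tree_packing_decomposition_general G hG s i p hadj hpar D hD C hiC B A hB hA
end
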